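/- Let S(F,y) be periodic with least period N, and let its minimal polynomial be X^m + ∑_{i<m} α_i X^i (so that necessarily α_0 = 1 in ZMod 2). Then the point x := F^[m−1] y + ∑_{i=1}^{m−1} α_i • F^[i−1] y satisfies F x = y; moreover x = F^[N−1] y, so x lies on the periodic orbit of y and is the unique solution of F x = y on that orbit. -/
import Mathlib


/-- A nonzero polynomial `p` over `ZMod 2` is an annihilating (characteristic) polynomial
of the sequence `S(F,y) = (F^[k] y)ₖ` if for every `k ≥ 0`,
`∑_{i=0}^{deg p} (coeff of Xⁱ in p) • F^[k+i] y = 0`. -/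
def IsAnnihilating (n : ℕ) (F : (Fin n → ZMod 2) → (Fin n → ZMod 2))
    (y : Fin n → ZMod 2) (p : Polynomial (ZMod 2)) : Prop :=
  p ≠ 0 ∧ ∀ k : ℕ, ∑ i ∈ Finset.range (p.natDegree + 1), p.coeff i • F^[k + i] y = 0

/-- Let `S(F,y)` be periodic with least period `N` and minimal polynomial
`μ = X^m + ∑_{i<m} αᵢ Xⁱ` (with `αᵢ = μ.coeff i`). Then
`x := F^[m−1] y + ∑_{i=1}^{m−1} αᵢ • F^[i−1] y` satisfies `F x = y`; moreover
`x = F^[N−1] y`, so `x` lies on the periodic orbit of `y` and is the unique solution of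
`F x = y` on that orbit. -/
theorem unique_solution_in_periodic_orbit (n : ℕ) (hn : 0 < n)
    (F : (Fin n → ZMod 2) → (Fin n → ZMod 2)) (y : Fin n → ZMod 2)
    (N : ℕ) (hN : 1 ≤ N) (hper : ∀ k : ℕ, F^[k + N] y = F^[k] y)
    (hleast : ∀ N' : ℕ, 1 ≤ N' → (∀ k : ℕ, F^[k + N'] y = F^[k] y) → N ≤ N')
    (μ : Polynomial (ZMod 2)) (hmonic : μ.Monic) (hann : IsAnnihilating n F y μ)
    (hmin : ∀ p : Polynomial (ZMod 2), IsAnnihilating n F y p → μ.natDegree ≤ p.natDegree)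
    (x : Fin n → ZMod 2)
    (hx : x = F^[μ.natDegree - 1] y +
      ∑ i ∈ Finset.Ico 1 μ.natDegree, μ.coeff i • F^[i - 1] y) :
    F x = y ∧ x = F^[N - 1] y ∧
    (∀ x' : Fin n → ZMod 2, (∃ k : ℕ, F^[k] y = x') → F x' = y → x' = x) := by
  set m := μ.natDegree with hm
  have hneg : ∀ v : Fin n → ZMod 2, -v = v := by
    intro v; funext i; exact CharTwo.neg_eq _
  have hperM : ∀ k t : ℕ, F^[k + t * N] y = F^[k] y := by
    intro k t
    induction t with
    | zero => simp
    | succ t ih =>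
      have h1 : k + (t + 1) * N = (k + t * N) + N := by ring
      rw [h1, hper, ih]
  -- the constant coefficient of μ is 1
  have hc0 : μ.coeff 0 = 1 := by
    rcases Nat.eq_zero_or_pos m with hm0 | hm1
    · have h1 : μ = 1 := hmonic.natDegree_eq_zero.mp hm0
      simp [h1]
    · by_contra hne
      have hc00 : μ.coeff 0 = 0 := by
        have : ∀ a : ZMod 2, a ≠ 1 → a = 0 := by decide
        exact this _ hne
      set q := μ.divX with hq
      have hqdeg : q.natDegree = m - 1 := Polynomial.natDegree_divX_eq_natDegree_tsub_one
      have hqc : ∀ i, q.coeff i = μ.coeff (i + 1) := fun i => Polynomial.coeff_divX ..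
      have hqne : q ≠ 0 := by
        intro h0
        have : μ.coeff m = 0 := by
          have := hqc (m - 1)
          rw [h0] at this
          simp only [Polynomial.coeff_zero] at this
          have he : m - 1 + 1 = m := by omega
          rw [he] at this
          exact this.symm
        rw [hmonic.coeff_natDegree] at this
        exact one_ne_zero this
      -- key shifted annihilation
      have hq1 : ∀ k : ℕ, ∑ i ∈ Finset.range m, q.coeff i • F^[k + 1 + i] y = 0 := by
        intro k
        have h2 := hann.2 k
        rw [Finset.sum_range_succ'] at h2
        rw [hc00, zero_smul, add_zero] at h2
        calc ∑ i ∈ Finset.range m, q.coeff i • F^[k + 1 + i] y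
            = ∑ i ∈ Finset.range m, μ.coeff (i + 1) • F^[k + (i + 1)] y := by
              apply Finset.sum_congr rfl
              intro i _
              have h3 : k + 1 + i = k + (i + 1) := by omega
              rw [hqc, h3]
          _ = 0 := h2
      have hqann : IsAnnihilating n F y q := by
        refine ⟨hqne, ?_⟩
        intro k
        have hdeg1 : q.natDegree + 1 = m := by omega
        rw [hdeg1]
        cases k with
        | zero =>
          calc ∑ i ∈ Finset.range m, q.coeff i • F^[0 + i] y
              = ∑ i ∈ Finset.range m, q.coeff i • F^[(N - 1) + 1 + i] y := by
                apply Finset.sum_congr rfl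
                intro i _
                have h3 : (N - 1) + 1 + i = i + N := by omega
                rw [h3, hper, Nat.zero_add]
            _ = 0 := hq1 (N - 1)
        | succ k => exact hq1 k
      have := hmin q hqann
      omega
  -- main identity : x = F^[N-1] y
  have hxN : x = F^[N - 1] y := by
    rcases Nat.eq_zero_or_pos m with hm0 | hm1
    · -- degenerate case : μ = 1, sequence identically zero
      have h1 : μ = 1 := hmonic.natDegree_eq_zero.mp hm0
      have hzero : ∀ k : ℕ, F^[k] y = 0 := by
        intro k
        have h2 := hann.2 k
        rw [h1] at h2
        simpa using h2
      rw [hx]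
      simp [hzero]
    · have hrel := hann.2 (N - 1)
      have e0 : μ.coeff 0 • F^[N - 1 + 0] y = F^[N - 1] y := by
        rw [hc0, one_smul, Nat.add_zero]
      have em : μ.coeff m • F^[N - 1 + m] y = F^[m - 1] y := by
        have h3 : N - 1 + m = (m - 1) + N := by omega
        rw [hmonic.coeff_natDegree, one_smul, h3, hper]
      have emid : ∑ i ∈ Finset.Ico 1 m, μ.coeff i • F^[N - 1 + i] y
          = ∑ i ∈ Finset.Ico 1 m, μ.coeff i • F^[i - 1] y := by
        apply Finset.sum_congr rfl
        intro i hi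
        rw [Finset.mem_Ico] at hi
        have h3 : N - 1 + i = (i - 1) + N := by omega
        rw [h3, hper]
      rw [Finset.range_eq_Ico, Finset.sum_Ico_succ_top (Nat.zero_le m),
        Finset.sum_eq_sum_Ico_succ_bot hm1, e0, em, emid] at hrel
      -- hrel : F^[N-1] y + ∑ ... + F^[m-1] y = 0
      have h4 : F^[N - 1] y = -((∑ i ∈ Finset.Ico 1 m, μ.coeff i • F^[i - 1] y) + F^[m - 1] y) := by
        apply eq_neg_of_add_eq_zero_left
        rw [← add_assoc]
        exact hrel
      rw [hneg] at h4
      rw [hx, h4, add_comm]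
  have hFx : F x = y := by
    rw [hxN, ← Function.iterate_succ_apply' F (N - 1) y]
    have h5 : (N - 1).succ = N := by omega
    rw [h5]
    have h6 := hper 0
    rwa [Nat.zero_add] at h6
  refine ⟨hFx, hxN, ?_⟩
  rintro x' ⟨k, rfl⟩ hFx'
  have h1 : F^[k + 1] y = y := by
    rw [Function.iterate_succ_apply', hFx']
  have hperiod : ∀ j : ℕ, F^[j + (k + 1)] y = F^[j] y := by
    intro j
    rw [Function.iterate_add_apply, h1]
  have hr0 : (k + 1) % N = 0 := by
    by_contra hr
    have hrlt : (k + 1) % N < N := Nat.mod_lt _ (by omega)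
    have hr1 : 1 ≤ (k + 1) % N := Nat.pos_of_ne_zero hr
    have hperr : ∀ j : ℕ, F^[j + (k + 1) % N] y = F^[j] y := by
      intro j
      have hdm : (k + 1) % N + (k + 1) / N * N = k + 1 := Nat.mod_add_div' (k + 1) N
      calc F^[j + (k + 1) % N] y
          = F^[j + (k + 1) % N + ((k + 1) / N) * N] y := (hperM _ _).symm
        _ = F^[j + (k + 1)] y := by rw [add_assoc, hdm]
        _ = F^[j] y := hperiod j
    exact absurd (hleast _ hr1 hperr) (not_le.mpr hrlt)
  obtain ⟨q, hq⟩ : N ∣ (k + 1) := Nat.dvd_of_mod_eq_zero hr0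
  obtain ⟨q', rfl⟩ : ∃ q', q = q' + 1 := by
    rcases q with _ | q'
    · omega
    · exact ⟨q', rfl⟩
  have hk' : k = (N - 1) + q' * N := by
    rw [Nat.mul_add, Nat.mul_one, Nat.mul_comm N q'] at hq
    set a := q' * N with ha
    omega
  rw [hxN, hk', hperM]
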